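/- arXiv:2406.12332 — 6 statements merged into one kernel-verified Lean document; each statement's English description precedes it below -/
import Mathlib

section
/- Let n be a positive integer with gcd(j, 3n) = 1 and q = exp(2πij/(3n)). Then the sum over k from 1 to n of 1/(1 - q^{3k-1}) equals (n/3)·(1 - q^n). -/
/-!
Since `q ^ (3k - 1) = q ^ 2 * (q ^ 3) ^ (k - 1)` and `q ^ 3` is a primitive `n`-th root of unity,
the summands are `1 / (1 - x)` for `x` running over the roots of `X ^ n = q ^ (2n)`, whose sum is
`n / (1 - q ^ (2n))`. As `ω = q ^ n` is a primitive cube root of unity, `(1 - ω) (1 - ω ^ 2) = 3`.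
-/

open Finset Complex Real

theorem IsPrimitiveRoot.geom_sum_pow_eq_zero {R : Type*} [CommRing R] [IsDomain R] {ζ : R}
    {n t : ℕ} (hζ : IsPrimitiveRoot ζ n) (ht : ¬ n ∣ t) :
    ∑ i ∈ range n, (ζ ^ t) ^ i = 0 := by
  have hne : 1 - ζ ^ t ≠ 0 := sub_ne_zero.mpr fun h => ht (hζ.pow_eq_one_iff_dvd t |>.mp h.symm)
  have h := mul_neg_geom_sum (ζ ^ t) n
  rw [← pow_mul, mul_comm t n, pow_mul, hζ.pow_eq_one, one_pow, sub_self] at h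
  exact (mul_eq_zero.mp h).resolve_left hne

/-- Expanding each `1 / (1 - x)` as `(∑ t < n, x ^ t) / (1 - w ^ n)`, only `t = 0` survives the
sum over `i`. -/
theorem IsPrimitiveRoot.sum_one_div_one_sub_mul_pow {K : Type*} [Field K] {ζ w : K} {n : ℕ}
    (hζ : IsPrimitiveRoot ζ n) (hw : w ^ n ≠ 1) :
    ∑ i ∈ range n, 1 / (1 - w * ζ ^ i) = n / (1 - w ^ n) := by
  have hwn : 1 - w ^ n ≠ 0 := sub_ne_zero.mpr hw.symm
  have hn : 0 < n := Nat.pos_of_ne_zero fun h => hw (by rw [h, pow_zero])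
  have hterm (i : ℕ) :
      1 / (1 - w * ζ ^ i) = (∑ t ∈ range n, w ^ t * (ζ ^ t) ^ i) / (1 - w ^ n) := by
    have h := mul_neg_geom_sum (w * ζ ^ i) n
    rw [mul_pow, ← pow_mul, mul_comm i, pow_mul, hζ.pow_eq_one, one_pow, mul_one] at h
    have hi : 1 - w * ζ ^ i ≠ 0 := left_ne_zero_of_mul (h ▸ hwn)
    rw [div_eq_div_iff hi hwn, one_mul, ← h, mul_comm]
    simp only [mul_pow, ← pow_mul, mul_comm i]
  calc ∑ i ∈ range n, 1 / (1 - w * ζ ^ i)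
      = (∑ t ∈ range n, w ^ t * ∑ i ∈ range n, (ζ ^ t) ^ i) / (1 - w ^ n) := by
        simp only [hterm, ← sum_div, mul_sum]
        rw [sum_comm]
    _ = n / (1 - w ^ n) := by
        rw [sum_eq_single_of_mem 0 (mem_range.mpr hn)]
        · simp
        · intro t ht ht0
          rw [hζ.geom_sum_pow_eq_zero fun h => ht0 (Nat.eq_zero_of_dvd_of_lt h (mem_range.mp ht)),
            mul_zero]

theorem IsPrimitiveRoot.one_div_one_sub_sq_of_three {K : Type*} [Field K] {ω : K}
    (hω : IsPrimitiveRoot ω 3) : 1 / (1 - ω ^ 2) = (1 - ω) / 3 := by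
  have hcube : 1 + ω + ω ^ 2 = 0 := by
    simpa [sum_range_succ] using hω.geom_sum_eq_zero (by norm_num)
  have h1 : 1 - ω ≠ 0 := sub_ne_zero.mpr (hω.ne_one (by norm_num)).symm
  have h2 : 1 - ω ^ 2 ≠ 0 :=
    sub_ne_zero.mpr (hω.pow_ne_one_of_pos_of_lt two_ne_zero (by norm_num)).symm
  have h3 : (1 - ω) * (1 - ω ^ 2) = 3 := by linear_combination hω.pow_eq_one - hcube
  rw [div_eq_div_iff h2 (h3 ▸ mul_ne_zero h1 h2)]
  linear_combination -h3

theorem sum_one_div_one_sub_q_pow_three_k_sub_one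
    (n j : ℕ) (hn : 0 < n) (hj : Nat.gcd j (3 * n) = 1)
    (q : ℂ) (hq : q = Complex.exp (2 * Real.pi * Complex.I * j / (3 * n))) :
    ∑ k ∈ Finset.Icc 1 n, 1 / (1 - q ^ (3 * k - 1)) = (n : ℂ) / 3 * (1 - q ^ n) := by
  have hprim : IsPrimitiveRoot q (3 * n) := by
    convert Complex.isPrimitiveRoot_exp_of_coprime j (3 * n) (by omega) hj using 2
    rw [hq, Nat.cast_mul, Nat.cast_ofNat, mul_div_assoc]
  have hq3 : IsPrimitiveRoot (q ^ 3) n := hprim.pow (by omega) rfl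
  have hqn : IsPrimitiveRoot (q ^ n) 3 := hprim.pow (by omega) (mul_comm _ _)
  have hq2 : (q ^ 2) ^ n ≠ 1 := by
    rw [← pow_mul, Ne, hprim.pow_eq_one_iff_dvd]
    intro h
    have := Nat.le_of_dvd (by omega) h
    omega
  calc ∑ k ∈ Icc 1 n, 1 / (1 - q ^ (3 * k - 1))
      = ∑ i ∈ range n, 1 / (1 - q ^ 2 * (q ^ 3) ^ i) := by
        rw [← Ico_add_one_right_eq_Icc, sum_Ico_eq_sum_range, Nat.add_sub_cancel]
        refine sum_congr rfl fun i _ => ?_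
        rw [← pow_mul, ← pow_add]
        congr 3
        omega
    _ = n / (1 - (q ^ 2) ^ n) := hq3.sum_one_div_one_sub_mul_pow hq2
    _ = n / 3 * (1 - q ^ n) := by
        rw [← pow_mul, mul_comm 2 n, pow_mul, div_eq_mul_one_div, hqn.one_div_one_sub_sq_of_three]
        ring
end

section
/- For any complex z with z^6 ≠ 1, z ≠ 0, and ω = e^{πi/3}, the identity z(1+ωz^3)(1-ωz)/(1-z^6) = ((1-ω^2)/3)·( 1/(1-z^{-2}) + 1/(1+ωz^2) - 1/(1-z^{-1}) - 1/(1+ωz) ) holds. -/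
/-!
Since `ω² = ω - 1`, the number `ω` is a primitive sixth root of unity and
`1 - z⁶ = (1 - z²)(1 + ωz²)(1 - ωz)(1 + ωz)`, so the left side is
`z(1 + ωz³) / ((1 - z²)(1 + ωz²)(1 + ωz))`. On the right, the two differences combine to
`z / (1 - z²)` and `ωz(1 - z) / ((1 + ωz)(1 + ωz²))`, whose sum is
`(1 + ω) z (1 + ωz³) / ((1 - z²)(1 + ωz)(1 + ωz²))`; finally `(1 - ω²)(1 + ω) = 3`.
-/

open Complex Real

theorem Complex.exp_pi_mul_I_div_three_sq :
    exp (π * I / 3) ^ 2 = exp (π * I / 3) - 1 := by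
  have hω : exp (π * I / 3) = 1 / 2 + (√3 / 2 : ℝ) * I := by
    rw [show (π : ℂ) * I / 3 = (π / 3 : ℝ) * I by push_cast; ring, exp_mul_I,
      ← ofReal_cos, ← ofReal_sin, cos_pi_div_three, sin_pi_div_three]
    push_cast
    ring
  have h3 : ((√3 : ℝ) : ℂ) ^ 2 = 3 := by
    rw [← ofReal_pow, Real.sq_sqrt (by norm_num)]
    norm_num
  rw [hω]
  push_cast
  linear_combination (↑√3 ^ 2 / 4 : ℂ) * I_sq - (1 / 4 : ℂ) * h3

section Field

variable {K : Type*} [Field K]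

theorem one_add_mul_ne_zero_of_pow_ne_one {ω w : K} {n : ℕ} (hω : ω ^ n = (-1) ^ n)
    (hw : w ^ n ≠ 1) : 1 + ω * w ≠ 0 := by
  intro h
  apply hw
  have hωw : ω * w = -1 := by linear_combination h
  calc w ^ n = ((-1) ^ n) ^ 2 * w ^ n := by
        rw [← pow_mul, mul_comm n 2, pow_mul, neg_one_sq, one_pow, one_mul]
    _ = (-1) ^ n * (ω * w) ^ n := by rw [mul_pow, hω]; ring
    _ = 1 := by rw [hωw, ← mul_pow]; simp

theorem one_div_one_sub_inv_sq_sub_one_div_one_sub_inv {z : K} (hz0 : z ≠ 0) (hz : z ^ 2 ≠ 1) :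
    1 / (1 - (z ^ 2)⁻¹) - 1 / (1 - z⁻¹) = z / (1 - z ^ 2) := by
  have hz1 : z - 1 ≠ 0 := sub_ne_zero.2 fun h ↦ hz (by rw [h, one_pow])
  field_simp
  ring

theorem one_div_one_add_mul_sq_sub_one_div_one_add_mul {a z : K} (h1 : 1 + a * z ≠ 0)
    (h2 : 1 + a * z ^ 2 ≠ 0) :
    1 / (1 + a * z ^ 2) - 1 / (1 + a * z) = a * z * (1 - z) / ((1 + a * z) * (1 + a * z ^ 2)) := by
  field_simp
  ring

variable {ω : K} (hω : ω ^ 2 = ω - 1)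
include hω

theorem pow_three_eq_neg_one_of_sq_eq_sub_one : ω ^ 3 = -1 := by
  linear_combination (ω + 1) * hω

theorem one_sub_pow_six_eq_mul_of_sq_eq_sub_one (z : K) :
    1 - z ^ 6 = (1 - z ^ 2) * (1 + ω * z ^ 2) * (1 - ω * z) * (1 + ω * z) := by
  linear_combination (1 - z ^ 2) * (z ^ 2 + (ω + 1) * z ^ 4) * hω

theorem one_sub_sq_mul_one_add_eq_three_of_sq_eq_sub_one : (1 - ω ^ 2) * (1 + ω) = 3 := by
  linear_combination -(ω + 2) * hω

theorem partial_fraction_identity_of_sq_eq_sub_one (h3 : (3 : K) ≠ 0) {z : K} (hz0 : z ≠ 0)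
    (hz : z ^ 6 ≠ 1) :
    z * (1 + ω * z ^ 3) * (1 - ω * z) / (1 - z ^ 6) =
      (1 - ω ^ 2) / 3 *
        (1 / (1 - (z ^ 2)⁻¹) + 1 / (1 + ω * z ^ 2) - 1 / (1 - z⁻¹) - 1 / (1 + ω * z)) := by
  have hω3 := pow_three_eq_neg_one_of_sq_eq_sub_one hω
  have hω6 : ω ^ 6 = (-1) ^ 6 := by rw [show ω ^ 6 = (ω ^ 3) ^ 2 by ring, hω3]; norm_num
  have hz2 : z ^ 2 ≠ 1 := fun h ↦ hz (by rw [show z ^ 6 = (z ^ 2) ^ 3 by ring, h, one_pow])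
  have h1 : 1 + ω * z ≠ 0 := one_add_mul_ne_zero_of_pow_ne_one hω6 hz
  have h2 : 1 + ω * z ^ 2 ≠ 0 :=
    one_add_mul_ne_zero_of_pow_ne_one (hω3.trans (by norm_num)) (by rwa [← pow_mul])
  have h1' : 1 - ω * z ≠ 0 := by
    rw [sub_eq_add_neg, ← neg_mul]
    exact one_add_mul_ne_zero_of_pow_ne_one (by rw [neg_pow, hω6]; norm_num) hz
  calc z * (1 + ω * z ^ 3) * (1 - ω * z) / (1 - z ^ 6)
      = z * (1 + ω * z ^ 3) / ((1 - z ^ 2) * (1 + ω * z) * (1 + ω * z ^ 2)) := by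
        rw [one_sub_pow_six_eq_mul_of_sq_eq_sub_one hω, mul_right_comm _ (1 - ω * z),
          mul_right_comm (1 - z ^ 2), mul_div_mul_right _ _ h1']
    _ = (1 - ω ^ 2) / 3 * ((1 + ω) * (z * (1 + ω * z ^ 3) /
          ((1 - z ^ 2) * (1 + ω * z) * (1 + ω * z ^ 2)))) := by
        rw [← mul_assoc, div_mul_eq_mul_div, one_sub_sq_mul_one_add_eq_three_of_sq_eq_sub_one hω,
          div_self h3, one_mul]
    _ = (1 - ω ^ 2) / 3 *
          (z / (1 - z ^ 2) + ω * z * (1 - z) / ((1 + ω * z) * (1 + ω * z ^ 2))) := by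
        congr 1
        field_simp
        ring
    _ = _ := by
        rw [← one_div_one_sub_inv_sq_sub_one_div_one_sub_inv hz0 hz2,
          ← one_div_one_add_mul_sq_sub_one_div_one_add_mul h1 h2]
        ring

end Field

theorem partial_fraction_z_identity
    (z : ℂ) (hz0 : z ≠ 0) (hz : z ^ 6 ≠ 1)
    (ω : ℂ) (hω : ω = Complex.exp (Real.pi * Complex.I / 3)) :
    z * (1 + ω * z ^ 3) * (1 - ω * z) / (1 - z ^ 6) =
      (1 - ω ^ 2) / 3 *
        (1 / (1 - (z ^ 2)⁻¹) + 1 / (1 + ω * z ^ 2) - 1 / (1 - z⁻¹) - 1 / (1 + ω * z)) := by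
  subst hω
  exact partial_fraction_identity_of_sq_eq_sub_one exp_pi_mul_I_div_three_sq three_ne_zero hz0 hz
end

section
/- Let N ≥ 1, x = π/(6N-3). Then Σ_{k=1}^{N-1} ( csc(2kx) + cot((2N-1-k)x) - cot((2N-1-2k)x) ) = 0. -/
open Finset Real

private lemma pair_sum (m : ℕ) (h : ℕ → ℝ) :
    ∑ j ∈ Finset.range (2 * m), h j
      = ∑ i ∈ Finset.range m, (h (2 * i) + h (2 * i + 1)) := by
  induction m with
  | zero => simp
  | succ n ih =>
    rw [show 2 * (n + 1) = 2 * n + 1 + 1 by ring, Finset.sum_range_succ,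
      Finset.sum_range_succ, ih, Finset.sum_range_succ]
    ring

private lemma cot_sum_key (m : ℕ) (G : ℕ → ℝ) :
    ∑ k ∈ Finset.Icc 1 m,
      (G k + G (2 * m + 1 - k) - (G (2 * k) + G (2 * m + 1 - 2 * k))) = 0 := by
  have hIcc : ∀ f : ℕ → ℝ, ∑ k ∈ Finset.Icc 1 m, f k = ∑ i ∈ Finset.range m, f (1 + i) := by
    intro f
    rw [← Finset.Ico_add_one_right_eq_Icc, Finset.sum_Ico_eq_sum_range]
    simp
  rw [Finset.sum_sub_distrib, sub_eq_zero, hIcc, hIcc, Finset.sum_add_distrib,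
    Finset.sum_add_distrib]
  have hA2 : ∑ i ∈ Finset.range m, G (2 * m + 1 - (1 + i))
      = ∑ i ∈ Finset.range m, G (m + (1 + i)) := by
    rw [← Finset.sum_range_reflect (fun i => G (m + (1 + i))) m]
    apply Finset.sum_congr rfl
    intro i hi
    simp only [Finset.mem_range] at hi
    congr 1
    omega
  have hB2 : ∑ i ∈ Finset.range m, G (2 * m + 1 - 2 * (1 + i))
      = ∑ i ∈ Finset.range m, G (2 * i + 1) := by
    rw [← Finset.sum_range_reflect (fun i => G (2 * i + 1)) m]
    apply Finset.sum_congr rfl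
    intro i hi
    simp only [Finset.mem_range] at hi
    congr 1
    omega
  have hA : ∑ i ∈ Finset.range m, G (1 + i) + ∑ i ∈ Finset.range m, G (2 * m + 1 - (1 + i))
      = ∑ j ∈ Finset.range (2 * m), G (j + 1) := by
    rw [hA2, show 2 * m = m + m by ring, Finset.sum_range_add]
    congr 1
    · exact Finset.sum_congr rfl fun i _ => by rw [Nat.add_comm 1 i]
    · exact Finset.sum_congr rfl fun i _ => by congr 1; omega
  have hB : ∑ i ∈ Finset.range m, G (2 * (1 + i)) + ∑ i ∈ Finset.range m, G (2 * m + 1 - 2 * (1 + i))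
      = ∑ j ∈ Finset.range (2 * m), G (j + 1) := by
    rw [hB2, pair_sum m (fun j => G (j + 1)), ← Finset.sum_add_distrib]
    apply Finset.sum_congr rfl
    intro i _
    have e1 : 2 * (1 + i) = 2 * i + 1 + 1 := by omega
    rw [e1]
    ring
  rw [hA, hB]

private lemma csc_eq (a : ℝ) (ha : Real.sin a ≠ 0) (h2a : Real.sin (2 * a) ≠ 0) :
    1 / Real.sin (2 * a) = Real.cot a - Real.cot (2 * a) := by
  rw [Real.cot_eq_cos_div_sin, Real.cot_eq_cos_div_sin, div_sub_div _ _ ha h2a]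
  have : Real.cos a * Real.sin (2 * a) - Real.sin a * Real.cos (2 * a)
      = Real.sin a := by
    have := Real.sin_sub (2 * a) a
    rw [show 2 * a - a = a by ring] at this
    linarith [this]
  rw [this, eq_div_iff (mul_ne_zero ha h2a), one_div, inv_mul_eq_div, div_eq_iff h2a]

theorem trig_csc_cot_sum_eq_zero
    (N : ℕ) (hN : 1 ≤ N) (x : ℝ) (hx : x = Real.pi / (6 * N - 3)) :
    ∑ k ∈ Finset.Icc 1 (N - 1),
      (1 / Real.sin (2 * k * x) + Real.cot ((2 * N - 1 - k) * x)
        - Real.cot ((2 * N - 1 - 2 * k) * x)) = 0 := by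
  obtain ⟨m, rfl⟩ : ∃ m, N = m + 1 := ⟨N - 1, (Nat.succ_pred_eq_of_pos hN).symm⟩
  have hx' : x = Real.pi / (6 * m + 3) := by
    rw [hx]; push_cast; ring_nf
  have hD : (0 : ℝ) < 6 * m + 3 := by positivity
  have hsin : ∀ j : ℕ, 1 ≤ j → j ≤ 2 * m + 1 → 0 < Real.sin (j * x) := by
    intro j hj1 hj2
    apply Real.sin_pos_of_pos_of_lt_pi
    · rw [hx']
      have : (0:ℝ) < (j : ℝ) := by exact_mod_cast hj1
      positivity
    · rw [hx', div_eq_mul_inv, ← mul_assoc, ← div_eq_mul_inv, div_lt_iff₀ hD]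
      have hj : (j : ℝ) ≤ 2 * m + 1 := by exact_mod_cast hj2
      nlinarith [Real.pi_pos]
  have hred : ∑ k ∈ Finset.Icc 1 ((m + 1) - 1),
      (1 / Real.sin (2 * k * x) + Real.cot ((2 * (m + 1 : ℕ) - 1 - k) * x)
        - Real.cot ((2 * (m + 1 : ℕ) - 1 - 2 * k) * x))
      = ∑ k ∈ Finset.Icc 1 m,
        ((fun j : ℕ => Real.cot (j * x)) k + (fun j : ℕ => Real.cot (j * x)) (2 * m + 1 - k)
          - ((fun j : ℕ => Real.cot (j * x)) (2 * k)
            + (fun j : ℕ => Real.cot (j * x)) (2 * m + 1 - 2 * k))) := by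
    rw [Nat.add_sub_cancel]
    apply Finset.sum_congr rfl
    intro k hk
    simp only [Finset.mem_Icc] at hk
    obtain ⟨hk1, hk2⟩ := hk
    have e1 : 1 / Real.sin (2 * k * x) = Real.cot ((k : ℕ) * x) - Real.cot (((2 * k : ℕ) : ℝ) * x) := by
      have h1 : Real.sin ((k : ℝ) * x) ≠ 0 := ne_of_gt (hsin k hk1 (by omega))
      have h2 : Real.sin (2 * ((k : ℝ) * x)) ≠ 0 := by
        have := hsin (2 * k) (by omega) (by omega)
        push_cast at this
        rw [show 2 * (k : ℝ) * x = 2 * ((k:ℝ) * x) by ring] at this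
        exact ne_of_gt this
      rw [show 2 * (k : ℝ) * x = 2 * ((k:ℝ) * x) by ring, csc_eq _ h1 h2]
      push_cast
      ring_nf
    have e2 : ((2 * (m + 1 : ℕ) : ℝ) - 1 - k) * x = ((2 * m + 1 - k : ℕ) : ℝ) * x := by
      have : ((2 * m + 1 - k : ℕ) : ℝ) = 2 * (m + 1 : ℕ) - 1 - k := by
        push_cast [Nat.cast_sub (show k ≤ 2 * m + 1 by omega)]
        ring
      rw [this]
    have e3 : ((2 * (m + 1 : ℕ) : ℝ) - 1 - 2 * k) * x = ((2 * m + 1 - 2 * k : ℕ) : ℝ) * x := by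
      have : ((2 * m + 1 - 2 * k : ℕ) : ℝ) = 2 * (m + 1 : ℕ) - 1 - 2 * k := by
        push_cast [Nat.cast_sub (show 2 * k ≤ 2 * m + 1 by omega)]
        ring
      rw [this]
    simp only [e2, e3]
    rw [e1]
    push_cast
    ring
  rw [hred, cot_sum_key m (fun j : ℕ => Real.cot (j * x))]
end

section
/- Let N ≥ 1 and let q be a primitive (6N-3)-th root of unity with q^{2N-1} = e^{2πi/3}, and set ω = e^{πi/3}. Then Σ_{k=1}^{N-1} q^k(1+ω q^{3k})(1-ω q^k)/(1-q^{6k}) = 0. -/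
/-!
Put `M = 2N - 1` and `D m = 1 / (1 - q ^ m)`. Since `ω` is a primitive sixth root of unity,
`ω ^ 2 = ω - 1`, and since `q ^ M = ω ^ 2`, the `k`-th summand times `1 + ω` has the partial
fraction decomposition `D k + D (M - k) - D (2k) - D (M - 2k)`. As `k` runs over `1, …, N - 1`,
both `{k, M - k}` and `{2k, M - 2k}` run over `1, …, M - 1` exactly once, so the sum vanishes.
-/

open Finset

theorem IsPrimitiveRoot.sq_eq_sub_one {R : Type*} [CommRing R] [IsDomain R] {ω : R}
    (hω : IsPrimitiveRoot ω 6) : ω ^ 2 = ω - 1 := by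
  have := (hω.isRoot_cyclotomic (by norm_num)).eq_zero
  rw [Polynomial.cyclotomic_six] at this
  simp only [Polynomial.eval_add, Polynomial.eval_sub, Polynomial.eval_pow, Polynomial.eval_X,
    Polynomial.eval_one] at this
  linear_combination this

theorem one_sub_pow_six_eq {K : Type*} [CommRing K] {ω : K} (hω : ω ^ 2 = ω - 1) (x : K) :
    1 - x ^ 6 = (1 - x) * (1 + x) * (x - ω ^ 2) * (x + ω ^ 2) * (x ^ 2 - ω ^ 2) := by
  linear_combination ((1 - ω ^ 3) * (1 + ω) + (x ^ 2 * ω ^ 2 - x ^ 4) * (ω ^ 2 + ω + 1)) * hω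

theorem partial_fractions_of_sq_eq_sub_one {K : Type*} [Field K] {ω x u v : K}
    (hω : ω ^ 2 = ω - 1) (hu : u * x = ω ^ 2) (hv : v * x ^ 2 = ω ^ 2)
    (hx6 : 1 - x ^ 6 ≠ 0) :
    (1 + ω) * (x * (1 + ω * x ^ 3) * (1 - ω * x) / (1 - x ^ 6))
      = 1 / (1 - x) + 1 / (1 - u) - 1 / (1 - x ^ 2) - 1 / (1 - v) := by
  have hx : x ≠ 0 := by
    rintro rfl
    have : ω = 0 := by simpa using hu.symm
    simp [this] at hω
  rw [eq_div_of_mul_eq hx hu, eq_div_of_mul_eq (pow_ne_zero 2 hx) hv]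
  rw [one_sub_pow_six_eq hω] at hx6 ⊢
  simp only [mul_ne_zero_iff] at hx6
  obtain ⟨⟨⟨⟨hx₁, hx₂⟩, hxω₁⟩, hxω₂⟩, hxω₃⟩ := hx6
  have hx₃ : 1 - x ^ 2 ≠ 0 := by
    rw [show 1 - x ^ 2 = (1 - x) * (1 + x) by ring]; exact mul_ne_zero hx₁ hx₂
  field_simp
  linear_combination
    (1 + ω) * x * (1 - x ^ 2) * (1 + ω - ω ^ 3 - ω * x * (1 - x ^ 2) - x ^ 4) * hω

theorem partial_fractions_pow {K : Type*} [Field K] {ω q : K} {M k : ℕ} (hω : ω ^ 2 = ω - 1)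
    (hqM : q ^ M = ω ^ 2) (hk : 2 * k ≤ M) (hq6 : q ^ (6 * k) ≠ 1) :
    (1 + ω) * (q ^ k * (1 + ω * q ^ (3 * k)) * (1 - ω * q ^ k) / (1 - q ^ (6 * k)))
      = (1 / (1 - q ^ k) + 1 / (1 - q ^ (M - k)))
        - (1 / (1 - q ^ (2 * k)) + 1 / (1 - q ^ (M - 2 * k))) := by
  have hu : q ^ (M - k) * q ^ k = ω ^ 2 := by rw [← pow_add, Nat.sub_add_cancel (by omega), hqM]
  have hv : q ^ (M - 2 * k) * (q ^ k) ^ 2 = ω ^ 2 := by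
    rw [← pow_mul, mul_comm k, ← pow_add, Nat.sub_add_cancel hk, hqM]
  have := partial_fractions_of_sq_eq_sub_one hω hu hv
    (by rwa [← pow_mul, mul_comm k, sub_ne_zero, ne_comm])
  simp only [← pow_mul, mul_comm k] at this
  rw [this]; ring

theorem sum_Icc_add_reflect {M : Type*} [AddCommMonoid M] (f : ℕ → M) (N : ℕ) :
    ∑ k ∈ Icc 1 (N - 1), (f k + f (2 * N - 1 - k)) = ∑ m ∈ Icc 1 (2 * N - 2), f m := by
  rw [sum_add_distrib, ← sum_filter_add_sum_filter_not (Icc 1 (2 * N - 2)) (· < N)]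
  congr 1
  · congr 1
    ext m
    simp only [mem_Icc, mem_filter]
    omega
  · refine sum_nbij' (2 * N - 1 - ·) (2 * N - 1 - ·) ?_ ?_ ?_ ?_ ?_ <;>
      intro k hk <;> simp only [mem_Icc, mem_filter] at hk ⊢ <;> omega

theorem sum_Icc_even_add_odd {M : Type*} [AddCommMonoid M] (f : ℕ → M) (N : ℕ) :
    ∑ k ∈ Icc 1 (N - 1), (f (2 * k) + f (2 * N - 1 - 2 * k)) =
      ∑ m ∈ Icc 1 (2 * N - 2), f m := by
  rw [sum_add_distrib, ← sum_filter_add_sum_filter_not (Icc 1 (2 * N - 2)) Even]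
  congr 1
  · refine sum_nbij' (2 * ·) (· / 2) ?_ ?_ ?_ ?_ ?_ <;>
      intro k hk <;> simp only [mem_Icc, mem_filter, Nat.even_iff] at hk ⊢ <;> omega
  · refine sum_nbij' (2 * N - 1 - 2 * ·) (fun m ↦ (2 * N - 1 - m) / 2) ?_ ?_ ?_ ?_ ?_ <;>
      intro k hk <;> simp only [mem_Icc, mem_filter, Nat.even_iff] at hk ⊢ <;> omega

theorem key_sum_eq_zero_general
    (N : ℕ) (q : ℂ) (hq : IsPrimitiveRoot q (6 * N - 3))
    (hq' : q ^ (2 * N - 1) = Complex.exp (2 * Real.pi * Complex.I / 3))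
    (ω : ℂ) (hω : ω = Complex.exp (Real.pi * Complex.I / 3)) :
    ∑ k ∈ Finset.Icc 1 (N - 1),
      q ^ k * (1 + ω * q ^ (3 * k)) * (1 - ω * q ^ k) / (1 - q ^ (6 * k)) = 0 := by
  have hω6 : IsPrimitiveRoot ω 6 := by
    rw [hω]; convert Complex.isPrimitiveRoot_exp 6 (by norm_num) using 2; push_cast; ring
  have hω2 := hω6.sq_eq_sub_one
  have hω1 : 1 + ω ≠ 0 := by
    intro h
    rw [show ω = -1 by linear_combination h] at hω2
    norm_num at hω2
  have hqM : q ^ (2 * N - 1) = ω ^ 2 := by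
    rw [hq', hω, ← Complex.exp_nat_mul]; push_cast; ring_nf
  refine (mul_eq_zero.1 ?_).resolve_left hω1
  set D : ℕ → ℂ := fun m ↦ 1 / (1 - q ^ m)
  calc (1 + ω) * ∑ k ∈ Icc 1 (N - 1),
        q ^ k * (1 + ω * q ^ (3 * k)) * (1 - ω * q ^ k) / (1 - q ^ (6 * k))
      = ∑ k ∈ Icc 1 (N - 1),
          ((D k + D (2 * N - 1 - k)) - (D (2 * k) + D (2 * N - 1 - 2 * k))) := by
        rw [mul_sum]
        refine sum_congr rfl fun k hk ↦ ?_
        rw [mem_Icc] at hk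
        exact partial_fractions_pow hω2 hqM (by omega)
          (hq.pow_ne_one_of_pos_of_lt (by omega) (by omega))
    _ = 0 := by rw [sum_sub_distrib, sum_Icc_add_reflect, sum_Icc_even_add_odd, sub_self]

theorem key_sum_eq_zero
    (N : ℕ) (hN : 1 ≤ N) (q : ℂ) (hq : IsPrimitiveRoot q (6 * N - 3))
    (hq' : q ^ (2 * N - 1) = Complex.exp (2 * Real.pi * Complex.I / 3))
    (ω : ℂ) (hω : ω = Complex.exp (Real.pi * Complex.I / 3)) :
    ∑ k ∈ Finset.Icc 1 (N - 1),
      q ^ k * (1 + ω * q ^ (3 * k)) * (1 - ω * q ^ k) / (1 - q ^ (6 * k)) = 0 :=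
  key_sum_eq_zero_general N q hq hq' ω hω
end

section
/- Let n = 2N be even, q = exp(2πij/(6N)) with gcd(j,6N)=1, and ω = q^N (so ω^2 = ω - 1 and ω^3 = -1). Then ω^2·Σ_{k=1}^{N-1} q^k/(1-q^{6k}) + Σ_{k=1}^{N} q^{2k-1}/(1-q^{6k-3}) - Σ_{k=1}^{N} 1/(1-q^{3k-2}) = -(N/3)(1+ω) + 1/3 - ω/6. -/
/-!
Write `T a = 1 / (1 - q ^ a)` and `ω = q ^ N`. The reflection `k ↦ N - k` turns
`x ^ 5 / (1 - x ^ 6)` at `x = q ^ k` into `ω ^ 2 * x / (1 - x ^ 6)`, and `k ↦ N + 1 - k` turns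
`x ^ 2 / (1 - x ^ 3)` at `x = q ^ (2k - 1)` into `ω * x / (1 - x ^ 3)`. So `1 + ω ^ 2 = ω`
(resp. `1 + ω`) times a twisted sum is a sum of `(x + x ^ 5) / (1 - x ^ 6)`
(resp. `(x + x ^ 2) / (1 - x ^ 3)`), whose partial fractions are values of `T`.
The resulting sums of `T` over arithmetic progressions are tied together by
`T a + T (6N - a) = 1`, by the distribution relation
`∑ j < d, 1 / (1 - ζ ^ j x) = d / (1 - x ^ d)` for a primitive `d`-th root `ζ`
(with `d = 2, 3, 2N`), and by sorting `1, …, 3N - 1` (resp. `2N - 1`) once by residue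
mod `3` (resp. `2`) and once into blocks of length `N`. A linear combination of these
identities is the claim.
-/

open Finset

section FieldIdentities

variable {K : Type*} [Field K] {x y z : K}

theorem one_div_one_sub_add_one_div_one_sub_of_mul_eq_one (h : x * y = 1) (hx : x ≠ 1) :
    1 / (1 - x) + 1 / (1 - y) = 1 := by
  have hy : y ≠ 1 := by rintro rfl; exact hx (by simpa using h)
  have h1 : 1 - x ≠ 0 := sub_ne_zero.2 hx.symm
  have h2 : 1 - y ≠ 0 := sub_ne_zero.2 hy.symm
  field_simp
  linear_combination -h

theorem div_one_sub_pow_six_add_pow_five_div (hx : x ^ 6 ≠ 1) :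
    x / (1 - x ^ 6) + x ^ 5 / (1 - x ^ 6) =
      1 / (1 - x) - 1 / (1 - x ^ 2) - 1 / (1 - x ^ 3) + 1 / (1 - x ^ 6) := by
  have h6 : 1 - x ^ 6 ≠ 0 := sub_ne_zero.2 hx.symm
  have h1 : 1 - x ≠ 0 := fun h => h6 (by
    linear_combination (1 + x + x ^ 2 + x ^ 3 + x ^ 4 + x ^ 5) * h)
  have h2 : 1 - x ^ 2 ≠ 0 := fun h => h6 (by linear_combination (1 + x ^ 2 + x ^ 4) * h)
  have h3 : 1 - x ^ 3 ≠ 0 := fun h => h6 (by linear_combination (1 + x ^ 3) * h)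
  field_simp
  ring

theorem div_one_sub_pow_three_add_sq_div (hx : x ^ 3 ≠ 1) :
    x / (1 - x ^ 3) + x ^ 2 / (1 - x ^ 3) = 1 / (1 - x) - 1 / (1 - x ^ 3) := by
  have h3 : 1 - x ^ 3 ≠ 0 := sub_ne_zero.2 hx.symm
  have h1 : 1 - x ≠ 0 := fun h => h3 (by linear_combination (1 + x + x ^ 2) * h)
  field_simp
  ring

theorem pow_five_div_one_sub_pow_six_of_mul_eq (hxy : x * y = z) (hz : z ^ 3 = -1)
    (hx : x ^ 6 ≠ 1) : y ^ 5 / (1 - y ^ 6) = z ^ 2 * (x / (1 - x ^ 6)) := by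
  subst hxy
  have hx' : 1 - x ^ 6 ≠ 0 := sub_ne_zero.2 hx.symm
  have hy' : 1 - y ^ 6 ≠ 0 := fun h => hx' (by
    linear_combination -x ^ 6 * h - ((x * y) ^ 3 - 1) * hz)
  rw [← mul_div_assoc, div_eq_div_iff hy' hx']
  linear_combination y ^ 2 * (y ^ 3 - x ^ 3) * hz

theorem sq_div_one_sub_pow_three_of_mul_eq (hxy : x * y = z ^ 2) (hz : z ^ 3 = -1)
    (hx : x ^ 3 ≠ 1) : y ^ 2 / (1 - y ^ 3) = z * (x / (1 - x ^ 3)) := by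
  have hx' : 1 - x ^ 3 ≠ 0 := sub_ne_zero.2 hx.symm
  have hy' : 1 - y ^ 3 ≠ 0 := fun h => hx' (by
    linear_combination -x ^ 3 * h - (x ^ 2 * y ^ 2 + x * y * z ^ 2 + z ^ 4) * hxy
      - (z ^ 3 - 1) * hz)
  rw [← mul_div_assoc, div_eq_div_iff hy' hx']
  linear_combination (y ^ 2 - x * z) * hz + (z * y ^ 2 - x * (x * y + z ^ 2)) * hxy

end FieldIdentities

namespace Finset

variable {M : Type*}

theorem sum_Icc_one_congr_reflect [AddCommMonoid M] {n : ℕ} {f g : ℕ → M}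
    (h : ∀ k ∈ Icc 1 n, ∀ l, k + l = n + 1 → f l = g k) :
    ∑ k ∈ Icc 1 n, f k = ∑ k ∈ Icc 1 n, g k := by
  refine sum_nbij' (fun k => n + 1 - k) (fun k => n + 1 - k) ?_ ?_ ?_ ?_
    fun k hk => h _ ?_ _ ?_ <;>
  simp only [mem_Icc] at * <;> omega

theorem sum_Icc_one_eq_sum_range [AddCommMonoid M] (f : ℕ → M) (n : ℕ) :
    ∑ k ∈ Icc 1 n, f k = ∑ k ∈ range n, f (k + 1) := by
  rw [← Ico_add_one_right_eq_Icc, sum_Ico_eq_sum_range]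
  simp [add_comm]

theorem sum_range_eq_add_sum_Icc_one [AddCommMonoid M] (f : ℕ → M) {n : ℕ} (hn : 0 < n) :
    ∑ k ∈ range n, f k = f 0 + ∑ k ∈ Icc 1 (n - 1), f k := by
  obtain ⟨n, rfl⟩ := Nat.exists_eq_add_one_of_ne_zero hn.ne'
  rw [sum_range_succ', sum_Icc_one_eq_sum_range, add_comm, Nat.add_sub_cancel]

theorem sum_range_mul_eq_sum_sum_residue [AddCommMonoid M] (f : ℕ → M) (d n : ℕ) :
    ∑ m ∈ range (d * n), f m = ∑ r ∈ range d, ∑ k ∈ range n, f (d * k + r) := by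
  induction n with
  | zero => simp
  | succ n ih => simp only [Nat.mul_succ, sum_range_add, ih, sum_range_succ, sum_add_distrib]

theorem sum_range_mul_eq_sum_sum_block [AddCommMonoid M] (f : ℕ → M) (d n : ℕ) :
    ∑ m ∈ range (d * n), f m = ∑ i ∈ range d, ∑ k ∈ range n, f (n * i + k) := by
  induction d with
  | zero => simp
  | succ d ih => rw [Nat.succ_mul, sum_range_add, ih, sum_range_succ, mul_comm]

theorem sum_residues_mod_three_eq_sum_blocks [AddCancelCommMonoid M] (f : ℕ → M) {n : ℕ}
    (hn : 0 < n) :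
    ∑ k ∈ Icc 1 n, f (3 * k - 2) + ∑ k ∈ Icc 1 n, f (3 * k - 1) +
        ∑ k ∈ Icc 1 (n - 1), f (3 * k) =
      ∑ k ∈ Icc 1 (n - 1), f k + ∑ k ∈ Icc 1 (n - 1), f (n + k) +
        ∑ k ∈ Icc 1 (n - 1), f (2 * n + k) + f n + f (2 * n) := by
  have h := (sum_range_mul_eq_sum_sum_residue f 3 n).symm.trans
    (sum_range_mul_eq_sum_sum_block f 3 n)
  have h1 : ∑ k ∈ Icc 1 n, f (3 * k - 2) = ∑ k ∈ range n, f (3 * k + 1) := by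
    rw [sum_Icc_one_eq_sum_range]
    exact sum_congr rfl fun k _ => by rw [show 3 * (k + 1) - 2 = 3 * k + 1 by omega]
  have h2 : ∑ k ∈ Icc 1 n, f (3 * k - 1) = ∑ k ∈ range n, f (3 * k + 2) := by
    rw [sum_Icc_one_eq_sum_range]
    exact sum_congr rfl fun k _ => by rw [show 3 * (k + 1) - 1 = 3 * k + 2 by omega]
  simp only [sum_range_succ, sum_range_zero, zero_add, add_zero, mul_one, mul_comm n 2] at h
  rw [← h1, ← h2] at h
  simp only [sum_range_eq_add_sum_Icc_one _ hn, mul_zero, add_zero] at h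
  apply add_left_cancel (a := f 0)
  convert h using 1 <;> abel_nf

theorem sum_residues_mod_two_eq_sum_blocks [AddCancelCommMonoid M] (f : ℕ → M) {n : ℕ}
    (hn : 0 < n) :
    ∑ k ∈ Icc 1 n, f (2 * k - 1) + ∑ k ∈ Icc 1 (n - 1), f (2 * k) =
      ∑ k ∈ Icc 1 (n - 1), f k + ∑ k ∈ Icc 1 (n - 1), f (n + k) + f n := by
  have h := (sum_range_mul_eq_sum_sum_residue f 2 n).symm.trans
    (sum_range_mul_eq_sum_sum_block f 2 n)
  have h1 : ∑ k ∈ Icc 1 n, f (2 * k - 1) = ∑ k ∈ range n, f (2 * k + 1) := by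
    rw [sum_Icc_one_eq_sum_range]
    exact sum_congr rfl fun k _ => by rw [show 2 * (k + 1) - 1 = 2 * k + 1 by omega]
  simp only [sum_range_succ, sum_range_zero, zero_add, add_zero, mul_one] at h
  rw [← h1] at h
  simp only [sum_range_eq_add_sum_Icc_one _ hn, mul_zero, add_zero] at h
  apply add_left_cancel (a := f 0)
  convert h using 1 <;> abel_nf

end Finset

namespace IsPrimitiveRoot

variable {K : Type*} [Field K] {q : K} {m : ℕ}

theorem one_div_one_sub_pow_add_one_div_one_sub_pow (hq : IsPrimitiveRoot q m) {a b : ℕ}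
    (hab : a + b = m) (ha : 0 < a) (hb : 0 < b) : 1 / (1 - q ^ a) + 1 / (1 - q ^ b) = 1 :=
  one_div_one_sub_add_one_div_one_sub_of_mul_eq_one (by rw [← pow_add, hab, hq.pow_eq_one])
    (hq.pow_ne_one_of_pos_of_lt ha.ne' (by omega))

theorem sum_Icc_one_div_one_sub_pow_add_sum_of_reflect (hq : IsPrimitiveRoot q m) {n : ℕ}
    {a b : ℕ → ℕ} (hab : ∀ k ∈ Icc 1 n, ∀ l, k + l = n + 1 → a k + b l = m)
    (ha : ∀ k ∈ Icc 1 n, 0 < a k) (hb : ∀ k ∈ Icc 1 n, 0 < b k) :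
    ∑ k ∈ Icc 1 n, 1 / (1 - q ^ a k) + ∑ k ∈ Icc 1 n, 1 / (1 - q ^ b k) = n := by
  have hreflect : ∑ k ∈ Icc 1 n, 1 / (1 - q ^ b k) =
      ∑ k ∈ Icc 1 n, 1 / (1 - q ^ b (n + 1 - k)) :=
    sum_Icc_one_congr_reflect fun k _ l hkl => by rw [show l = n + 1 - k by omega]
  rw [hreflect, ← sum_add_distrib, sum_congr rfl fun k hk => ?_, sum_const, Nat.card_Icc,
    Nat.add_sub_cancel, nsmul_one]
  have hk' : n + 1 - k ∈ Icc 1 n := by simp only [mem_Icc] at hk ⊢; omega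
  exact hq.one_div_one_sub_pow_add_one_div_one_sub_pow
    (hab k hk _ (by simp only [mem_Icc] at hk; omega)) (ha k hk) (hb _ hk')

theorem sum_one_div_one_sub_pow_mul {ζ x : K} {d : ℕ} (hζ : IsPrimitiveRoot ζ d)
    (hx : x ^ d ≠ 1) : ∑ j ∈ range d, 1 / (1 - ζ ^ j * x) = d / (1 - x ^ d) := by
  have hd : 1 - x ^ d ≠ 0 := sub_ne_zero.2 hx.symm
  have hd0 : 0 < d := Nat.pos_of_ne_zero fun h => hx (by rw [h, pow_zero])
  have hgeom (j : ℕ) :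
      1 / (1 - ζ ^ j * x) = (∑ i ∈ range d, x ^ i * (ζ ^ i) ^ j) / (1 - x ^ d) := by
    have hpow : (ζ ^ j * x) ^ d = x ^ d := by
      rw [mul_pow, ← pow_mul, mul_comm j, pow_mul, hζ.pow_eq_one, one_pow, one_mul]
    have hne : 1 - ζ ^ j * x ≠ 0 := fun h => hx (by
      rw [← hpow, ← eq_of_sub_eq_zero h, one_pow])
    rw [div_eq_div_iff hne hd, one_mul, ← hpow, ← mul_neg_geom_sum, mul_comm]
    congr 1
    exact sum_congr rfl fun i _ => by ring
  have horth (i : ℕ) (hi : i ∈ range d) (hi0 : i ≠ 0) :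
      ∑ j ∈ range d, (ζ ^ i) ^ j = 0 := by
    rw [geom_sum_eq (hζ.pow_ne_one_of_pos_of_lt hi0 (mem_range.1 hi)), ← pow_mul, mul_comm,
      pow_mul, hζ.pow_eq_one, one_pow, sub_self, zero_div]
  rw [sum_congr rfl fun j _ => hgeom j, ← sum_div, sum_comm]
  simp_rw [← mul_sum]
  rw [sum_eq_single_of_mem 0 (mem_range.2 hd0) fun i hi hi0 => by
    rw [horth i hi hi0, mul_zero]]
  simp

theorem sum_range_one_div_one_sub_pow_mul_add (hq : IsPrimitiveRoot q m) (hm : 0 < m)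
    {d e : ℕ} (hde : m = e * d) {a : ℕ} (ha : q ^ (d * a) ≠ 1) :
    ∑ j ∈ range d, 1 / (1 - q ^ (e * j + a)) = d / (1 - q ^ (d * a)) := by
  have h := (hq.pow hm hde).sum_one_div_one_sub_pow_mul (x := q ^ a) (by rwa [← pow_mul'])
  simpa only [← pow_mul, ← pow_add, mul_comm a d] using h

variable {N : ℕ}

theorem pow_pow_three_eq_neg_one (hq : IsPrimitiveRoot q (6 * N)) (hN : 0 < N) :
    (q ^ N) ^ 3 = -1 := by
  rw [← pow_mul']
  exact (hq.pow (by omega) (by ring)).eq_neg_one_of_two_right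

theorem pow_sq_sub_pow_add_one_eq_zero (hq : IsPrimitiveRoot q (6 * N)) (hN : 0 < N) :
    (q ^ N) ^ 2 - q ^ N + 1 = 0 := by
  have h := (hq.pow (by omega) (by ring : 6 * N = 2 * N * 3)).geom_sum_eq_zero (by norm_num)
  simp only [sum_range_succ, sum_range_zero, pow_mul'] at h
  linear_combination h - q ^ N * hq.pow_pow_three_eq_neg_one hN

theorem one_div_one_sub_pow (hq : IsPrimitiveRoot q (6 * N)) (hN : 0 < N) :
    1 / (1 - q ^ N) = q ^ N :=
  (eq_one_div_of_mul_eq_one_right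
    (by linear_combination -hq.pow_sq_sub_pow_add_one_eq_zero hN)).symm

theorem one_div_one_sub_pow_two_mul [CharZero K] (hq : IsPrimitiveRoot q (6 * N))
    (hN : 0 < N) :
    1 / (1 - q ^ (2 * N)) = (1 + q ^ N) / 3 := by
  refine (eq_one_div_of_mul_eq_one_right ?_).symm
  rw [pow_mul']
  linear_combination (-(q ^ N + 2) / 3) * hq.pow_sq_sub_pow_add_one_eq_zero hN

theorem pow_mul_sum_div_one_sub_pow_six_mul [CharZero K] (hq : IsPrimitiveRoot q (6 * N))
    (hN : 0 < N) :
    q ^ N * ∑ k ∈ Icc 1 (N - 1), q ^ k / (1 - q ^ (6 * k)) =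
      ∑ k ∈ Icc 1 (N - 1), 1 / (1 - q ^ k) - ∑ k ∈ Icc 1 (N - 1), 1 / (1 - q ^ (2 * k)) -
        ∑ k ∈ Icc 1 (N - 1), 1 / (1 - q ^ (3 * k)) + ((N - 1 : ℕ) : K) / 2 := by
  have hne (k : ℕ) (hk : k ∈ Icc 1 (N - 1)) : (q ^ k) ^ 6 ≠ 1 := by
    simp only [mem_Icc] at hk
    rw [← pow_mul]
    exact hq.pow_ne_one_of_pos_of_lt (by omega) (by omega)
  have htwist : ∑ k ∈ Icc 1 (N - 1), q ^ (5 * k) / (1 - q ^ (6 * k)) =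
      (q ^ N) ^ 2 * ∑ k ∈ Icc 1 (N - 1), q ^ k / (1 - q ^ (6 * k)) := by
    rw [mul_sum]
    refine sum_Icc_one_congr_reflect fun k hk l hkl => ?_
    simp only [pow_mul']
    exact pow_five_div_one_sub_pow_six_of_mul_eq (by rw [← pow_add]; congr 1; omega)
      (hq.pow_pow_three_eq_neg_one hN) (hne k hk)
  have hpartial : ∑ k ∈ Icc 1 (N - 1), (q ^ k / (1 - q ^ (6 * k)) +
      q ^ (5 * k) / (1 - q ^ (6 * k))) =
      ∑ k ∈ Icc 1 (N - 1), (1 / (1 - q ^ k) - 1 / (1 - q ^ (2 * k)) - 1 / (1 - q ^ (3 * k)) +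
        1 / (1 - q ^ (6 * k))) := sum_congr rfl fun k hk => by
    simpa only [pow_mul'] using div_one_sub_pow_six_add_pow_five_div (hne k hk)
  have hhalf := hq.sum_Icc_one_div_one_sub_pow_add_sum_of_reflect (n := N - 1)
    (a := fun k => 6 * k) (b := fun k => 6 * k) (fun _ _ _ _ => by omega)
    (fun k hk => by simp only [mem_Icc] at hk; omega)
    (fun k hk => by simp only [mem_Icc] at hk; omega)
  simp only [sum_add_distrib, sum_sub_distrib, htwist] at hpartial
  linear_combination hpartial + hhalf / 2
    - (∑ k ∈ Icc 1 (N - 1), q ^ k / (1 - q ^ (6 * k))) * hq.pow_sq_sub_pow_add_one_eq_zero hN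

theorem one_add_pow_mul_sum_div_one_sub_pow_six_mul_sub_three [CharZero K]
    (hq : IsPrimitiveRoot q (6 * N)) (hN : 0 < N) :
    (1 + q ^ N) * ∑ k ∈ Icc 1 N, q ^ (2 * k - 1) / (1 - q ^ (6 * k - 3)) =
      ∑ k ∈ Icc 1 N, 1 / (1 - q ^ (2 * k - 1)) - N / 2 := by
  have hcube (k : ℕ) : q ^ (6 * k - 3) = (q ^ (2 * k - 1)) ^ 3 := by
    rw [← pow_mul]; congr 1; omega
  have hne (k : ℕ) (hk : k ∈ Icc 1 N) : (q ^ (2 * k - 1)) ^ 3 ≠ 1 := by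
    simp only [mem_Icc] at hk
    rw [← hcube]
    exact hq.pow_ne_one_of_pos_of_lt (by omega) (by omega)
  have htwist : ∑ k ∈ Icc 1 N, (q ^ (2 * k - 1)) ^ 2 / (1 - q ^ (6 * k - 3)) =
      q ^ N * ∑ k ∈ Icc 1 N, q ^ (2 * k - 1) / (1 - q ^ (6 * k - 3)) := by
    rw [mul_sum]
    refine sum_Icc_one_congr_reflect fun k hk l hkl => ?_
    rw [hcube, hcube]
    refine sq_div_one_sub_pow_three_of_mul_eq ?_ (hq.pow_pow_three_eq_neg_one hN) (hne k hk)
    simp only [mem_Icc] at hk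
    rw [← pow_add, ← pow_mul]
    congr 1
    omega
  have hpartial : ∑ k ∈ Icc 1 N, (q ^ (2 * k - 1) / (1 - q ^ (6 * k - 3)) +
      (q ^ (2 * k - 1)) ^ 2 / (1 - q ^ (6 * k - 3))) =
      ∑ k ∈ Icc 1 N, (1 / (1 - q ^ (2 * k - 1)) - 1 / (1 - q ^ (6 * k - 3))) :=
    sum_congr rfl fun k hk => by
      simpa only [← hcube] using div_one_sub_pow_three_add_sq_div (hne k hk)
  have hhalf := hq.sum_Icc_one_div_one_sub_pow_add_sum_of_reflect (n := N)
    (a := fun k => 6 * k - 3) (b := fun k => 6 * k - 3)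
    (fun k hk _ _ => by simp only [mem_Icc] at hk; omega)
    (fun k hk => by simp only [mem_Icc] at hk; omega)
    (fun k hk => by simp only [mem_Icc] at hk; omega)
  rw [sum_add_distrib, sum_sub_distrib, htwist] at hpartial
  linear_combination hpartial - hhalf / 2

theorem sum_one_div_one_sub_pow_three_mul_sub_two_sub (hq : IsPrimitiveRoot q (6 * N))
    (hN : 0 < N) :
    ∑ k ∈ Icc 1 N, 1 / (1 - q ^ (3 * k - 2)) - ∑ k ∈ Icc 1 N, 1 / (1 - q ^ (3 * k - 1)) =
      2 * N / (1 - q ^ (2 * N)) - N := by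
  have hmaster : ∑ j ∈ range (2 * N), 1 / (1 - q ^ (3 * j + 1)) =
      (2 * N : ℕ) / (1 - q ^ (2 * N * 1)) :=
    hq.sum_range_one_div_one_sub_pow_mul_add (by omega) (by ring)
      (hq.pow_ne_one_of_pos_of_lt (by omega) (by omega))
  have hlow : ∑ k ∈ Icc 1 N, 1 / (1 - q ^ (3 * k - 2)) =
      ∑ j ∈ range N, 1 / (1 - q ^ (3 * j + 1)) := by
    rw [sum_Icc_one_eq_sum_range]
    exact sum_congr rfl fun j _ => by rw [show 3 * (j + 1) - 2 = 3 * j + 1 by omega]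
  have hhigh : ∑ k ∈ Icc 1 N, 1 / (1 - q ^ (3 * N + 3 * k - 2)) =
      ∑ j ∈ range N, 1 / (1 - q ^ (3 * (N + j) + 1)) := by
    rw [sum_Icc_one_eq_sum_range]
    exact sum_congr rfl fun j _ => by
      rw [show 3 * N + 3 * (j + 1) - 2 = 3 * (N + j) + 1 by omega]
  have hpair := hq.sum_Icc_one_div_one_sub_pow_add_sum_of_reflect (n := N)
    (a := fun k => 3 * N + 3 * k - 2) (b := fun k => 3 * k - 1)
    (fun k hk _ _ => by simp only [mem_Icc] at hk; omega)
    (fun k hk => by simp only [mem_Icc] at hk; omega)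
    (fun k hk => by simp only [mem_Icc] at hk; omega)
  rw [two_mul N, sum_range_add, ← hlow, ← hhigh, ← two_mul, mul_one] at hmaster
  push_cast at hmaster
  linear_combination hmaster - hpair

theorem two_mul_sum_one_div_one_sub_pow_two_mul (hq : IsPrimitiveRoot q (6 * N)) (hN : 0 < N) :
    2 * ∑ k ∈ Icc 1 (N - 1), 1 / (1 - q ^ (2 * k)) =
      ∑ k ∈ Icc 1 (N - 1), 1 / (1 - q ^ k) + (N - 1 : ℕ) -
        ∑ k ∈ Icc 1 (N - 1), 1 / (1 - q ^ (2 * N + k)) := by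
  have hmul : ∀ k ∈ Icc 1 (N - 1),
      1 / (1 - q ^ k) + 1 / (1 - q ^ (3 * N + k)) = 2 / (1 - q ^ (2 * k)) := by
    intro k hk
    simp only [mem_Icc] at hk
    have h := hq.sum_range_one_div_one_sub_pow_mul_add (by omega) (d := 2) (e := 3 * N)
      (a := k) (by ring) (hq.pow_ne_one_of_pos_of_lt (by omega) (by omega))
    simpa [sum_range_succ] using h
  have hpair := hq.sum_Icc_one_div_one_sub_pow_add_sum_of_reflect (n := N - 1)
    (a := fun k => 3 * N + k) (b := fun k => 2 * N + k)
    (fun _ _ _ _ => by omega) (fun _ _ => by omega)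
    (fun k hk => by simp only [mem_Icc] at hk; omega)
  rw [mul_sum]
  simp only [mul_one_div]
  rw [← sum_congr rfl hmul, sum_add_distrib]
  linear_combination hpair

theorem three_mul_sum_one_div_one_sub_pow_three_mul (hq : IsPrimitiveRoot q (6 * N))
    (hN : 0 < N) :
    3 * ∑ k ∈ Icc 1 (N - 1), 1 / (1 - q ^ (3 * k)) =
      ∑ k ∈ Icc 1 (N - 1), 1 / (1 - q ^ k) +
        ∑ k ∈ Icc 1 (N - 1), 1 / (1 - q ^ (2 * N + k)) + (N - 1 : ℕ) -
        ∑ k ∈ Icc 1 (N - 1), 1 / (1 - q ^ (N + k)) := by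
  have hmul : ∀ k ∈ Icc 1 (N - 1), 1 / (1 - q ^ k) + 1 / (1 - q ^ (2 * N + k)) +
      1 / (1 - q ^ (4 * N + k)) = 3 / (1 - q ^ (3 * k)) := by
    intro k hk
    simp only [mem_Icc] at hk
    have h := hq.sum_range_one_div_one_sub_pow_mul_add (by omega) (d := 3) (e := 2 * N)
      (a := k) (by ring) (hq.pow_ne_one_of_pos_of_lt (by omega) (by omega))
    simpa [sum_range_succ, show 2 * N * 2 = 4 * N by ring] using h
  have hpair := hq.sum_Icc_one_div_one_sub_pow_add_sum_of_reflect (n := N - 1)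
    (a := fun k => 4 * N + k) (b := fun k => N + k)
    (fun _ _ _ _ => by omega) (fun _ _ => by omega)
    (fun k hk => by simp only [mem_Icc] at hk; omega)
  rw [mul_sum]
  simp only [mul_one_div]
  rw [← sum_congr rfl hmul, sum_add_distrib, sum_add_distrib]
  linear_combination hpair

end IsPrimitiveRoot

theorem even_case_lemma
    (N j : ℕ) (hN : 0 < N) (hj : Nat.gcd j (6 * N) = 1)
    (q : ℂ) (hq : q = Complex.exp (2 * Real.pi * Complex.I * j / (6 * N)))
    (ω : ℂ) (hω : ω = q ^ N) :
    ω ^ 2 * ∑ k ∈ Finset.Icc 1 (N - 1), q ^ k / (1 - q ^ (6 * k)) +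
      ∑ k ∈ Finset.Icc 1 N, q ^ (2 * k - 1) / (1 - q ^ (6 * k - 3)) -
      ∑ k ∈ Finset.Icc 1 N, 1 / (1 - q ^ (3 * k - 2)) =
      -((N : ℂ) / 3) * (1 + ω) + 1 / 3 - ω / 6 := by
  have hprim : IsPrimitiveRoot q (6 * N) := by
    rw [hq]
    convert Complex.isPrimitiveRoot_exp_of_coprime j (6 * N) (by omega) hj using 2
    push_cast
    ring
  subst hω
  have E1 := hprim.pow_mul_sum_div_one_sub_pow_six_mul hN
  have E2 := hprim.one_add_pow_mul_sum_div_one_sub_pow_six_mul_sub_three hN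
  have E3 := hprim.sum_one_div_one_sub_pow_three_mul_sub_two_sub hN
  have E4 := sum_residues_mod_three_eq_sum_blocks (fun a => 1 / (1 - q ^ a)) hN
  have E5 := hprim.two_mul_sum_one_div_one_sub_pow_two_mul hN
  have E6 := hprim.three_mul_sum_one_div_one_sub_pow_three_mul hN
  have E7 := sum_residues_mod_two_eq_sum_blocks (fun a => 1 / (1 - q ^ a)) hN
  have hT1 := hprim.one_div_one_sub_pow hN
  have hT2 := hprim.one_div_one_sub_pow_two_mul hN
  have hrel := hprim.pow_sq_sub_pow_add_one_eq_zero hN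
  have hcast : ((N - 1 : ℕ) : ℂ) = N - 1 := by rw [Nat.cast_sub hN, Nat.cast_one]
  linear_combination q ^ N * E1 + (2 - q ^ N) / 3 * E2 - E3 / 2 - E4 / 2
    - (1 + q ^ N) / 3 * E5 - (2 * q ^ N - 1) / 6 * E6 + (2 - q ^ N) / 3 * E7
    + ((∑ k ∈ Icc 1 N, q ^ (2 * k - 1) / (1 - q ^ (6 * k - 3))) - 1) / 3 * hrel
    - (1 + q ^ N) / 6 * hcast - (N + 1 / 2) * hT2 + (1 - 2 * q ^ N) / 6 * hT1
end

section
/- Let n be a positive integer and 1 ≤ k ≤ n-1. Then, modulo Φ_n(q)^2, the Gaussian binomial coefficient [2n choose n+k]_q ≡ (q^n - 1)·2·(-1)^k·q^{-k(k-1)/2}/(1-q^k). -/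
open Polynomial Finset

/-- The Gaussian binomial coefficient as a polynomial in `q`, defined via the
    `q`-Pascal recurrence `[n+1, k+1] = [n, k] + q^(k+1) * [n, k+1]`. -/
noncomputable def qBinom : ℕ → ℕ → Polynomial ℚ
  | _, 0 => 1
  | 0, _ + 1 => 0
  | n + 1, k + 1 => qBinom n k + X ^ (k + 1) * qBinom n (k + 1)

lemma qBinom_zero (n : ℕ) : qBinom n 0 = 1 := by cases n <;> rfl
lemma qBinom_succ (n k : ℕ) :
    qBinom (n+1) (k+1) = qBinom n k + X ^ (k + 1) * qBinom n (k + 1) := rfl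
lemma qBinom_eq_zero : ∀ {n k : ℕ}, n < k → qBinom n k = 0
  | 0, _+1, _ => rfl
  | n+1, k+1, h => by
      rw [qBinom_succ, qBinom_eq_zero (by omega), qBinom_eq_zero (by omega)]; ring
lemma qBinom_self : ∀ n, qBinom n n = 1
  | 0 => rfl
  | n+1 => by rw [qBinom_succ, qBinom_self n, qBinom_eq_zero (Nat.lt_succ_self n)]; ring
noncomputable def Dq (m : ℕ) : Polynomial ℚ := ∏ i ∈ Finset.range m, (1 - X ^ (i+1))
lemma Dq_succ (m : ℕ) : Dq (m+1) = Dq m * (1 - X^(m+1)) := Finset.prod_range_succ _ _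
lemma Dq_ne_zero (m : ℕ) : Dq m ≠ 0 := by
  apply Finset.prod_ne_zero_iff.2
  intro i _ h
  have h1 : (1 : Polynomial ℚ) = X^(i+1) := sub_eq_zero.mp h
  have := congrArg natDegree h1
  simp [natDegree_X_pow] at this

lemma prodFormula : ∀ (n : ℕ), ∀ k ≤ n, qBinom n k * Dq k * Dq (n-k) = Dq n
  | 0 => by
    intro k hk
    interval_cases k
    simp [qBinom_zero, Dq]
  | n+1 => by
    intro k hk
    match k with
    | 0 => simp [qBinom_zero, Dq]
    | j+1 =>
      rcases Nat.lt_or_ge j n with hj | hj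
      · -- j + 1 ≤ n
        obtain ⟨a, rfl⟩ : ∃ a, n = j + 1 + a := ⟨n - (j+1), by omega⟩
        have h1 := prodFormula (j+1+a) j (by omega)
        have h2 := prodFormula (j+1+a) (j+1) (by omega)
        rw [show j+1+a - j = a+1 by omega] at h1
        rw [show j+1+a - (j+1) = a by omega] at h2
        rw [qBinom_succ, show j+1+a+1 - (j+1) = a+1 by omega, Dq_succ j, Dq_succ a,
          Dq_succ (j+1+a)]
        rw [Dq_succ a] at h1
        rw [Dq_succ j] at h2
        have hx : (X : Polynomial ℚ)^(j+1) * X^(a+1) = X^(j+1+a+1) := by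
          rw [← pow_add, show j+1+(a+1) = j+1+a+1 from by omega]
        linear_combination (1 - X^(j+1)) * h1 + X^(j+1) * (1 - X^(a+1)) * h2 -
          Dq (j+1+a) * hx
      · -- j ≥ n, so k = n+1
        have hj' : j = n := by omega
        subst hj'
        rw [qBinom_succ, qBinom_self, qBinom_eq_zero (Nat.lt_succ_self j)]
        simp [Dq]

lemma vandermonde (m n : ℕ) : ∀ (r : ℕ), qBinom (m + n) r =
    ∑ j ∈ range (r+1), qBinom m j * qBinom n (r - j) * X ^ ((m - j) * (r - j)) := by
  induction m with
  | zero =>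
    intro r
    rw [Finset.sum_range_succ']
    simp [qBinom_zero, qBinom]
  | succ m ih =>
    intro r
    match r with
    | 0 => simp [qBinom_zero]
    | s+1 =>
      have key : qBinom (m + 1 + n) (s+1) = qBinom (m + n) s + X^(s+1) * qBinom (m+n) (s+1) := by
        rw [show m + 1 + n = (m + n) + 1 by omega, qBinom_succ]
      rw [key, ih s, ih (s+1)]
      rw [Finset.sum_range_succ' (fun j => qBinom (m+1) j * qBinom n (s+1-j) * X^((m+1-j)*(s+1-j))) (s+1)]
      rw [Finset.mul_sum, Finset.sum_range_succ' (fun j => X^(s+1) * (qBinom m j * qBinom n (s+1-j) * X^((m-j)*(s+1-j)))) (s+1)]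
      simp only [Nat.succ_sub_succ, Nat.sub_zero, qBinom_zero, qBinom_succ]
      have hT : (X:Polynomial ℚ)^(s+1) * (1 * qBinom n (s+1) * X^(m*(s+1))) =
          1 * qBinom n (s+1) * X^((m+1)*(s+1)) := by
        rw [show (m+1)*(s+1) = (s+1) + m*(s+1) from by ring, pow_add]; ring
      have hS : ∀ x ∈ range (s+1), (X:Polynomial ℚ)^(s+1) *
          (qBinom m (x+1) * qBinom n (s-x) * X^((m-(x+1))*(s-x))) =
          X^(x+1) * qBinom m (x+1) * qBinom n (s-x) * X^((m-x)*(s-x)) := by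
        intro x hx
        rcases Nat.lt_or_ge x m with h | h
        · have hx' : x ≤ s := by
            have := Finset.mem_range.mp hx; omega
          obtain ⟨b, rfl⟩ : ∃ b, m = x + 1 + b := ⟨m - (x+1), by omega⟩
          obtain ⟨c, rfl⟩ : ∃ c, s = x + c := ⟨s - x, by omega⟩
          rw [show x+1+b - (x+1) = b from by omega, show x+1+b-x = b+1 from by omega,
            show x+c-x = c from by omega, show (b+1)*c = b*c + c from by ring]
          rw [show x+c+1 = (x+1)+c from by omega]
          rw [pow_add, pow_add]
          ring
        · rw [qBinom_eq_zero (show m < x+1 from by omega)]; ring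
      rw [Finset.sum_congr rfl hS, hT]
      simp only [add_mul, Finset.sum_add_distrib]
      ring

lemma phi_prime {n : ℕ} (hn : 0 < n) : Prime (cyclotomic n ℚ) :=
  (cyclotomic.irreducible_rat hn).prime

lemma phi_dvd_one_sub_X_pow (n : ℕ) : cyclotomic n ℚ ∣ (1 - X^n) := by
  have := cyclotomic.dvd_X_pow_sub_one (R := ℚ) (n := n)
  simpa using this.neg_right

lemma phi_not_dvd_one_sub (n i : ℕ) (h0 : 0 < i) (hi : i < n) :
    ¬ cyclotomic n ℚ ∣ (1 - X^i) := by
  intro h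
  have hn : 0 < n := h0.trans hi
  have hζ : IsPrimitiveRoot (Complex.exp (2 * Real.pi * Complex.I / n)) n :=
    Complex.isPrimitiveRoot_exp n (by omega)
  set ζ := Complex.exp (2 * Real.pi * Complex.I / n)
  have hmap : cyclotomic n ℂ ∣ ((1 : Polynomial ℂ) - X^i) := by
    have := Polynomial.map_dvd (algebraMap ℚ ℂ) h
    simpa [Polynomial.map_cyclotomic] using this
  have hroot : (cyclotomic n ℂ).IsRoot ζ := hζ.isRoot_cyclotomic hn
  obtain ⟨g, hg⟩ := hmap
  have : (1 : ℂ) - ζ^i = 0 := by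
    have := congrArg (Polynomial.eval ζ) hg
    simp at this
    rw [this, IsRoot.def.mp hroot]
    ring
  have hpow : ζ^i = 1 := by
    have := sub_eq_zero.mp this
    exact this.symm
  have hd := (hζ.pow_eq_one_iff_dvd i).mp hpow
  have := Nat.le_of_dvd h0 hd
  omega

lemma phi_not_dvd_Dq (n m : ℕ) (hm : m < n) : ¬ cyclotomic n ℚ ∣ Dq m := by
  intro h
  have hn : 0 < n := by omega
  obtain ⟨i, hi, hdvd⟩ := (Prime.dvd_finset_prod_iff (phi_prime hn) _).mp h
  exact phi_not_dvd_one_sub n (i+1) (Nat.succ_pos i) (by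
    have := Finset.mem_range.mp hi; omega) hdvd

lemma phi_dvd_qBinom (n j : ℕ) (h0 : 0 < j) (hj : j < n) :
    cyclotomic n ℚ ∣ qBinom n j := by
  have hn : 0 < n := by omega
  have hp := phi_prime hn
  have hdvd : cyclotomic n ℚ ∣ qBinom n j * Dq j * Dq (n-j) := by
    rw [prodFormula n j hj.le, show n = (n-1)+1 from by omega, Dq_succ,
      show (n-1)+1 = n from by omega]
    exact (phi_dvd_one_sub_X_pow n).mul_left _
  rcases hp.dvd_mul.mp hdvd with h1 | h2
  · rcases hp.dvd_mul.mp h1 with h3 | h4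
    · exact h3
    · exact absurd h4 (phi_not_dvd_Dq n j hj)
  · exact absurd h2 (phi_not_dvd_Dq n (n-j) (by omega))

lemma ratio (m j : ℕ) (hj : j + 1 ≤ m) :
    (1 - X^(j+1)) * qBinom m (j+1) = (1 - X^(m-j)) * qBinom m j := by
  obtain ⟨a, rfl⟩ : ∃ a, m = j + 1 + a := ⟨m - (j+1), by omega⟩
  have h1 := prodFormula (j+1+a) (j+1) (by omega)
  have h2 := prodFormula (j+1+a) j (by omega)
  rw [show j+1+a - (j+1) = a from by omega, Dq_succ j] at h1
  rw [show j+1+a - j = a+1 from by omega, Dq_succ a] at h2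
  rw [show j+1+a - j = a+1 from by omega]
  apply mul_right_cancel₀ (b := Dq j * Dq a) (mul_ne_zero (Dq_ne_zero j) (Dq_ne_zero a))
  linear_combination h1 - h2

lemma step3 (n : ℕ) (hn : 2 ≤ n) : ∀ j, j ≤ n - 2 →
    cyclotomic n ℚ ∣ qBinom (n-1) j * X ^ (j*(j+1)/2) - C ((-1:ℚ)^j)
  | 0, _ => by simp [qBinom_zero]
  | (j+1), hj => by
    have ih := step3 n hn j (by omega)
    have hr := ratio (n-1) j (by omega)
    have hp := phi_prime (show 0 < n from by omega)
    have hE : (j+1)*(j+1+1)/2 = j*(j+1)/2 + (j+1) := by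
      have h2 : (j+1)*(j+1+1) = j*(j+1) + 2*(j+1) := by ring
      omega
    have hw : n - 1 - j + (j+1) = n := by omega
    have hXn2 : cyclotomic n ℚ ∣ ((1:Polynomial ℚ) - X^(n-1-j+(j+1))) := by
      rw [hw]; exact phi_dvd_one_sub_X_pow n
    have hsign : C ((-1:ℚ)^(j+1)) = - C ((-1:ℚ)^j) := by
      rw [show ((-1:ℚ))^(j+1) = -((-1:ℚ)^j) from by ring, map_neg]
    have hid : (1 - X^(j+1)) * (qBinom (n-1) (j+1) * X^((j+1)*(j+1+1)/2) - C ((-1:ℚ)^(j+1)))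
        = (1 - X^(n-1-j)) * X^(j+1) *
            (qBinom (n-1) j * X^(j*(j+1)/2) - C ((-1:ℚ)^j))
          + C ((-1:ℚ)^j) * (1 - X^(n-1-j+(j+1))) := by
      rw [hE, hsign, pow_add, pow_add]
      linear_combination (X ^ (j*(j+1)/2) * X^(j+1)) * hr
    have hkey : cyclotomic n ℚ ∣ (1 - X^(j+1)) *
        (qBinom (n-1) (j+1) * X^((j+1)*(j+1+1)/2) - C ((-1:ℚ)^(j+1))) := by
      rw [hid]
      exact dvd_add (ih.mul_left _) (hXn2.mul_left _)
    rcases hp.dvd_mul.mp hkey with h1 | h2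
    · exact absurd h1 (phi_not_dvd_one_sub n (j+1) (Nat.succ_pos j) (by omega))
    · exact h2

lemma step1 (n k : ℕ) (hn : 2 ≤ n) (hk : 1 ≤ k) (hkn : k ≤ n - 1) :
    (cyclotomic n ℚ)^2 ∣
      qBinom (2*n) (n+k) - qBinom n k * (1 + X^((n-k)*n)) := by
  have hv := vandermonde n n (n+k)
  rw [show 2*n = n + n from by omega, hv]
  set f : ℕ → Polynomial ℚ :=
    fun j => qBinom n j * qBinom n ((n+k) - j) * X ^ ((n - j) * ((n+k) - j)) with hf
  have hkmem : k ∈ Finset.range (n+k+1) := by simp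
  have hnmem : n ∈ (Finset.range (n+k+1)).erase k := by
    simp [Finset.mem_erase]; omega
  rw [← Finset.add_sum_erase _ f hkmem, ← Finset.add_sum_erase _ f hnmem]
  have hfk : f k = qBinom n k * X^((n-k)*n) := by
    rw [hf]; simp only []
    rw [show n + k - k = n from by omega, qBinom_self]
    ring
  have hfn : f n = qBinom n k := by
    rw [hf]; simp only []
    rw [show n + k - n = k from by omega, qBinom_self, Nat.sub_self]
    ring
  rw [hfk, hfn]
  have hsum : (cyclotomic n ℚ)^2 ∣
      ∑ j ∈ ((Finset.range (n+k+1)).erase k).erase n, f j := by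
    apply Finset.dvd_sum
    intro j hj
    have hj1 : j ≠ n := (Finset.mem_erase.mp hj).1
    have hj2 : j ≠ k := (Finset.mem_erase.mp (Finset.mem_erase.mp hj).2).1
    have hj3 : j < n+k+1 := Finset.mem_range.mp
      (Finset.mem_erase.mp (Finset.mem_erase.mp hj).2).2
    rcases Nat.lt_or_ge j k with h | h
    · -- second factor zero
      rw [hf]; simp only []
      rw [qBinom_eq_zero (show n < n + k - j from by omega)]
      simp
    rcases Nat.lt_or_ge n j with h' | h'
    · rw [hf]; simp only []
      rw [qBinom_eq_zero (show n < j from h')]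
      simp
    · -- k < j < n
      rw [hf, pow_two]
      exact ((mul_dvd_mul (phi_dvd_qBinom n j (by omega) (by omega))
        (phi_dvd_qBinom n (n+k-j) (by omega) (by omega)))).mul_right _
  -- goal: Φ² ∣ (f k + (f n + ∑')) - qBinom n k * (1 + X^((n-k)*n))
  have : qBinom n k * X^((n-k)*n) + (qBinom n k + ∑ j ∈ ((Finset.range (n+k+1)).erase k).erase n, f j)
      - qBinom n k * (1 + X^((n-k)*n)) = ∑ j ∈ ((Finset.range (n+k+1)).erase k).erase n, f j := by
    ring
  rw [this]
  exact hsum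

lemma absorption (n k : ℕ) (hk : 1 ≤ k) (hkn : k ≤ n) :
    qBinom n k * (1 - X^k) = (1 - X^n) * qBinom (n-1) (k-1) := by
  obtain ⟨j, rfl⟩ : ∃ j, k = j + 1 := ⟨k-1, by omega⟩
  obtain ⟨a, rfl⟩ : ∃ a, n = j + 1 + a := ⟨n - (j+1), by omega⟩
  have h1 := prodFormula (j+1+a) (j+1) (by omega)
  have h2 := prodFormula (j+a) j (by omega)
  rw [show j+1+a - (j+1) = a from by omega, Dq_succ j,
    show j+1+a = (j+a)+1 from by omega, Dq_succ (j+a)] at h1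
  rw [show j+a - j = a from by omega] at h2
  rw [show j+1+a-1 = j+a from by omega, Nat.add_sub_cancel,
    show j+1+a = (j+a)+1 from by omega]
  apply mul_right_cancel₀ (b := Dq j * Dq a) (mul_ne_zero (Dq_ne_zero j) (Dq_ne_zero a))
  linear_combination h1 - (1 - X^(j+a+1)) * h2

/-- `[2n, n+k]_q ≡ (q^n - 1) * 2 * (-1)^k * q^{-k(k-1)/2} / (1 - q^k) (mod Φ_n(q)^2)`,
    stated after clearing the denominators `q^{k(k-1)/2}` and `1 - q^k`. -/
theorem qBinom_two_n_congruence (n k : ℕ) (hn : 0 < n) (hk : 1 ≤ k) (hkn : k ≤ n - 1) :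
    (Polynomial.cyclotomic n ℚ) ^ 2 ∣
      qBinom (2 * n) (n + k) * (1 - X ^ k) * X ^ (k * (k - 1) / 2) -
        Polynomial.C (2 * (-1 : ℚ) ^ k) * (X ^ n - 1) := by

  obtain ⟨j, rfl⟩ : ∃ j, k = j + 1 := ⟨k-1, by omega⟩
  have hn2 : 2 ≤ n := by omega
  simp only [Nat.add_sub_cancel]
  have h1 := step1 n (j+1) hn2 (by omega) hkn
  have habs := absorption n (j+1) (by omega) (by omega)
  have h3 := step3 n hn2 j (by omega)
  simp only [Nat.add_sub_cancel] at habs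
  obtain ⟨v, hv⟩ := h3
  obtain ⟨u, hu⟩ := phi_dvd_one_sub_X_pow n
  obtain ⟨A, hA⟩ := h1
  have hB : (cyclotomic n ℚ)^2 ∣ ((1:Polynomial ℚ) - X^n) * (X^((n-(j+1))*n) - 1) := by
    rw [pow_two]
    apply mul_dvd_mul (phi_dvd_one_sub_X_pow n)
    have hd : ((X:Polynomial ℚ)^n - 1) ∣ (X^((n-(j+1))*n) - 1) := by
      rw [show (n-(j+1))*n = n*(n-(j+1)) from by ring, pow_mul]
      simpa using sub_dvd_pow_sub_pow ((X:Polynomial ℚ)^n) 1 (n-(j+1))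
    exact dvd_trans (by simpa using (phi_dvd_one_sub_X_pow n).neg_right) hd
  obtain ⟨B, hB'⟩ := hB
  rw [show (j+1)*j/2 = j*(j+1)/2 from by rw [Nat.mul_comm]]
  rw [show (2*(-1:ℚ)^(j+1)) = -(2*(-1:ℚ)^j) from by ring, map_neg, map_mul, map_ofNat]
  refine ⟨A * (1-X^(j+1)) * X^(j*(j+1)/2) + B * qBinom (n-1) j * X^(j*(j+1)/2) + 2*u*v, ?_⟩
  have hw : 2*((1:Polynomial ℚ) - X^n)*(qBinom (n-1) j * X^(j*(j+1)/2) - C ((-1:ℚ)^j))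
      = (cyclotomic n ℚ)^2 * (2*u*v) := by
    rw [hu, hv]; ring
  linear_combination ((1-X^(j+1)) * X^(j*(j+1)/2)) * hA +
    ((1+X^((n-(j+1))*n)) * X^(j*(j+1)/2)) * habs +
    (qBinom (n-1) j * X^(j*(j+1)/2)) * hB' + hw
end
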